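/- Fix real parameters 0 < α < γ and define μ, β, δ, k, x, z as in the unduloid setup. Then the unduloid has constant mean curvature: its two principal curvatures, namely the meridian curvature k₁(v) = x'(v) z''(v) − x''(v) z'(v) and the parallel curvature k₂(v) = z'(v)/x(v), satisfy k₁(v) + k₂(v) = 2/(α+γ) for every v ∈ ℝ. -/

import Mathlib

/-!
Write `Q = x² = β sin(μv) + δ`. Since `γ² (1 - k² sin²(μv/2 - π/4)) = Q`, the two elliptic
integrals combine to `z' = μ (αγ + Q) / (2√Q)`. For any profile `x = √Q` with this `z'`,
`k₁ + k₂ = μ (Q'² - (αγ + Q) Q'' + 2 (αγ + Q)) / (4Q)`, and for `Q = β sin(μv) + δ` the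
numerator is exactly `4Q` because `μ² (αγ + δ) = 2` and `μ² β² = 2 (δ - αγ)`.
-/

open Real

/-- The incomplete elliptic integral of the first kind,
`F(φ, k) = ∫₀^φ (1 − k² sin²θ)^{−1/2} dθ`. -/
noncomputable def ellipticF (k φ : ℝ) : ℝ :=
  ∫ θ in (0:ℝ)..φ, (Real.sqrt (1 - k ^ 2 * Real.sin θ ^ 2))⁻¹

/-- The incomplete elliptic integral of the second kind,
`E(φ, k) = ∫₀^φ (1 − k² sin²θ)^{1/2} dθ`. -/
noncomputable def ellipticE (k φ : ℝ) : ℝ :=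
  ∫ θ in (0:ℝ)..φ, Real.sqrt (1 - k ^ 2 * Real.sin θ ^ 2)

noncomputable def meridianCurvature (x z : ℝ → ℝ) (v : ℝ) : ℝ :=
  deriv x v * deriv (deriv z) v - deriv (deriv x) v * deriv z v

noncomputable def parallelCurvature (x z : ℝ → ℝ) (v : ℝ) : ℝ :=
  deriv z v / x v

lemma meridianCurvature_add_parallelCurvature_of_sqrt {Q Q' Q'' x z : ℝ → ℝ} (a μ : ℝ)
    (hQ : ∀ v, 0 < Q v) (hQ' : ∀ v, HasDerivAt Q (Q' v) v)
    (hQ'' : ∀ v, HasDerivAt Q' (Q'' v) v) (hx : ∀ v, x v = √(Q v))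
    (hz : ∀ v, HasDerivAt z (μ * (a + Q v) / (2 * √(Q v))) v) (v : ℝ) :
    meridianCurvature x z v + parallelCurvature x z v =
      μ * (Q' v ^ 2 - (a + Q v) * Q'' v + 2 * (a + Q v)) / (4 * Q v) := by
  unfold meridianCurvature parallelCurvature
  have hsqrt : ∀ v, HasDerivAt (fun v => √(Q v)) (Q' v / (2 * √(Q v))) v :=
    fun v => (hQ' v).sqrt (hQ v).ne'
  have hx' : deriv x = fun v => Q' v / (2 * √(Q v)) := by
    rw [funext hx]; exact funext fun v => (hsqrt v).deriv
  have hz' : deriv z = fun v => μ * (a + Q v) / (2 * √(Q v)) :=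
    funext fun v => (hz v).deriv
  have hr : 0 < √(Q v) := sqrt_pos.2 (hQ v)
  have hx'' := (hQ'' v).fun_div ((hsqrt v).const_mul 2) (by positivity)
  have hz'' := (((hQ' v).const_add a).const_mul μ).fun_div ((hsqrt v).const_mul 2)
    (by positivity)
  rw [← hx'] at hx''
  rw [← hz'] at hz''
  rw [hx''.deriv, hz''.deriv, hx', hz', hx v]
  beta_reduce
  have hQr : Q v = √(Q v) ^ 2 := (sq_sqrt (hQ v).le).symm
  generalize √(Q v) = r at hr hQr ⊢
  rw [hQr]
  field_simp
  ring

lemma hasDerivAt_ellipticE (k φ : ℝ) :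
    HasDerivAt (ellipticE k) (√(1 - k ^ 2 * sin φ ^ 2)) φ := by
  have hg : Continuous fun θ => √(1 - k ^ 2 * sin θ ^ 2) := by fun_prop
  exact intervalIntegral.integral_hasDerivAt_right (hg.intervalIntegrable _ _)
    (hg.stronglyMeasurableAtFilter _ _) hg.continuousAt

lemma hasDerivAt_ellipticF {k : ℝ} (hk : k ^ 2 < 1) (φ : ℝ) :
    HasDerivAt (ellipticF k) (√(1 - k ^ 2 * sin φ ^ 2))⁻¹ φ := by
  have hpos : ∀ θ, 0 < 1 - k ^ 2 * sin θ ^ 2 := fun θ => by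
    nlinarith [sin_sq_le_one θ, sq_nonneg k]
  have hg : Continuous fun θ => (√(1 - k ^ 2 * sin θ ^ 2))⁻¹ :=
    Continuous.inv₀ (by fun_prop) fun θ => (sqrt_pos.2 (hpos θ)).ne'
  exact intervalIntegral.integral_hasDerivAt_right (hg.intervalIntegrable _ _)
    (hg.stronglyMeasurableAtFilter _ _) hg.continuousAt

lemma sin_sq_half_sub_pi_div_four (t : ℝ) : sin (t / 2 - π / 4) ^ 2 = (1 - sin t) / 2 := by
  rw [sin_sq_eq_half_sub, show 2 * (t / 2 - π / 4) = -(π / 2 - t) by ring, cos_neg,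
    cos_pi_div_two_sub]
  ring

section Unduloid

variable {α γ μ β δ k : ℝ}

lemma unduloid_radicand_pos (hα : 0 < α) (hαγ : α < γ) (hβ : β = (γ ^ 2 - α ^ 2) / 2)
    (hδ : δ = (γ ^ 2 + α ^ 2) / 2) (t : ℝ) : 0 < β * sin t + δ := by
  have h : 0 ≤ (γ ^ 2 - α ^ 2) * (sin t + 1) :=
    mul_nonneg (by nlinarith) (by linarith [neg_one_le_sin t])
  rw [hβ, hδ]
  nlinarith

lemma sqrt_one_sub_sq_mul_sin_sq_unduloid (hγ : 0 < γ) (hβ : β = (γ ^ 2 - α ^ 2) / 2)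
    (hδ : δ = (γ ^ 2 + α ^ 2) / 2) (hk : k ^ 2 = (γ ^ 2 - α ^ 2) / γ ^ 2) (t : ℝ) :
    √(1 - k ^ 2 * sin (t / 2 - π / 4) ^ 2) = √(β * sin t + δ) / γ := by
  have h : 1 - k ^ 2 * sin (t / 2 - π / 4) ^ 2 = (β * sin t + δ) / γ ^ 2 := by
    rw [sin_sq_half_sub_pi_div_four, hk, hβ, hδ]
    field_simp
    ring
  rw [h, sqrt_div' _ (sq_nonneg γ), sqrt_sq hγ.le]

lemma hasDerivAt_unduloid_height (hα : 0 < α) (hαγ : α < γ) (hβ : β = (γ ^ 2 - α ^ 2) / 2)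
    (hδ : δ = (γ ^ 2 + α ^ 2) / 2) (hk : k ^ 2 = (γ ^ 2 - α ^ 2) / γ ^ 2) (v : ℝ) :
    HasDerivAt
      (fun v => α * ellipticF k (μ * v / 2 - π / 4) + γ * ellipticE k (μ * v / 2 - π / 4))
      (μ * (α * γ + (β * sin (μ * v) + δ)) / (2 * √(β * sin (μ * v) + δ))) v := by
  have hγ : 0 < γ := hα.trans hαγ
  have hk1 : k ^ 2 < 1 := by
    rw [hk, div_lt_one (by positivity)]
    nlinarith
  have hφ : HasDerivAt (fun v => μ * v / 2 - π / 4) (μ / 2) v := by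
    simpa using (((hasDerivAt_id v).const_mul μ).div_const 2).sub_const (π / 4)
  have hF := ((hasDerivAt_ellipticF hk1 _).comp v hφ).const_mul α
  have hE := ((hasDerivAt_ellipticE k _).comp v hφ).const_mul γ
  refine (hF.add hE).congr_deriv ?_
  rw [sqrt_one_sub_sq_mul_sin_sq_unduloid hγ hβ hδ hk, mul_div_assoc]
  have hQ := unduloid_radicand_pos hα hαγ hβ hδ (μ * v)
  have hr : 0 < √(β * sin (μ * v) + δ) := sqrt_pos.2 hQ
  have hQr : β * sin (μ * v) + δ = √(β * sin (μ * v) + δ) ^ 2 := (sq_sqrt hQ.le).symm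
  generalize √(β * sin (μ * v) + δ) = r at hr hQr ⊢
  rw [hQr]
  field_simp

lemma unduloid_cmc_identity (hαγ : α + γ ≠ 0) (hμ : μ = 2 / (α + γ))
    (hβ : β = (γ ^ 2 - α ^ 2) / 2) (hδ : δ = (γ ^ 2 + α ^ 2) / 2) (t : ℝ) :
    (β * μ * cos t) ^ 2 - (α * γ + (β * sin t + δ)) * -(β * μ ^ 2 * sin t) +
      2 * (α * γ + (β * sin t + δ)) = 4 * (β * sin t + δ) := by
  rw [mul_pow, cos_sq', hμ, hβ, hδ]
  field_simp
  ring

end Unduloid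

/-- The unduloid with parameters `0 < α < γ` has constant mean curvature: its principal
curvatures `k₁ = x'z'' − x''z'` (meridian) and `k₂ = z'/x` (parallel) satisfy
`k₁(v) + k₂(v) = 2/(α+γ)` for every `v`. -/
theorem statement_12 (α γ : ℝ) (hα : 0 < α) (hαγ : α < γ)
    (μ β δ k : ℝ) (hμ : μ = 2 / (α + γ)) (hβ : β = (γ ^ 2 - α ^ 2) / 2)
    (hδ : δ = (γ ^ 2 + α ^ 2) / 2) (hk : k = Real.sqrt (γ ^ 2 - α ^ 2) / γ)
    (x z : ℝ → ℝ)
    (hx : ∀ v, x v = Real.sqrt (β * Real.sin (μ * v) + δ))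
    (hz : ∀ v, z v = α * ellipticF k (μ * v / 2 - Real.pi / 4) +
      γ * ellipticE k (μ * v / 2 - Real.pi / 4)) :
    ∀ v : ℝ,
      (deriv x v * deriv (deriv z) v - deriv (deriv x) v * deriv z v) +
        deriv z v / x v = 2 / (α + γ) := by
  intro v
  have hγ : 0 < γ := hα.trans hαγ
  have hk2 : k ^ 2 = (γ ^ 2 - α ^ 2) / γ ^ 2 := by
    rw [hk, div_pow, sq_sqrt (by nlinarith)]
  have hQ' (v : ℝ) : HasDerivAt (fun v => β * sin (μ * v) + δ) (β * μ * cos (μ * v)) v :=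
    (((((hasDerivAt_id v).const_mul μ).sin).const_mul β).add_const δ).congr_deriv
      (by simp only [id, mul_one]; ring)
  have hQ'' (v : ℝ) :
      HasDerivAt (fun v => β * μ * cos (μ * v)) (-(β * μ ^ 2 * sin (μ * v))) v :=
    ((((hasDerivAt_id v).const_mul μ).cos).const_mul (β * μ)).congr_deriv
      (by simp only [id, mul_one]; ring)
  have hQ := unduloid_radicand_pos hα hαγ hβ hδ
  have hz' (v : ℝ) := funext hz ▸ hasDerivAt_unduloid_height (μ := μ) hα hαγ hβ hδ hk2 v
  have hsum := meridianCurvature_add_parallelCurvature_of_sqrt (α * γ) μ (fun v => hQ _)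
    hQ' hQ'' hx hz' v
  show meridianCurvature x z v + parallelCurvature x z v = _
  rw [hsum, unduloid_cmc_identity (by positivity) hμ hβ hδ,
    mul_div_cancel_right₀ _ (by linarith [hQ (μ * v)]), hμ]
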